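/- Let κ be an infinite cardinal and let G be a completely metrizable topological group of weight ≤ κ. If for every ordinal γ < κ⁺ there exists a set S_γ ⊆ G of Cantor–Bendixson rank ≥ γ generating a free abelian subgroup with S_γ as a free basis, then G has a perfectly generated free abelian subgroup, i.e. there exists a perfect set P ⊆ G generating a free abelian subgroup with P as a free basis. -/

import Mathlib

open Set Filter Cardinal FirstOrder

universe u v

/-- A topological space is completely metrizable if its topology is induced by a complete metric. -/
def CompletelyMetrizable (Y : Type*) [t : TopologicalSpace Y] : Prop :=
  ∃ m : MetricSpace Y, m.toUniformSpace.toTopologicalSpace = t ∧ @CompleteSpace Y m.toUniformSpace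

/-- The weight of a topological space: the least cardinality of a topological basis. -/
noncomputable def topWeight (X : Type u) [TopologicalSpace X] : Cardinal.{u} :=
  ⨅ B : { B : Set (Set X) // TopologicalSpace.IsTopologicalBasis B }, Cardinal.mk B.1

/-- A set is dense-in-itself if it is nonempty and has no isolated points
(in the subspace topology). -/
def DenseInItselfSet {X : Type*} [TopologicalSpace X] (S : Set X) : Prop :=
  S.Nonempty ∧ ∀ x ∈ S, AccPt x (𝓟 S)

/-- A set is perfect if it is nonempty, completely metrizable in the subspace topology,
and has no isolated points. -/
def IsPerfectSet {X : Type*} [TopologicalSpace X] (P : Set X) : Prop :=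
  P.Nonempty ∧ CompletelyMetrizable P ∧ ∀ x ∈ P, AccPt x (𝓟 P)

/-- The `γ`-th Cantor–Bendixson derivative of a set: iterate the operation of removing
isolated points, taking intersections at limit stages. -/
noncomputable def cbDeriv {X : Type u} [TopologicalSpace X] (A : Set X) (γ : Ordinal.{v}) :
    Set X :=
  Ordinal.limitRecOn γ A (fun _ ih => { x ∈ ih | AccPt x (𝓟 ih) })
    (fun o _ ih => ⋂ (o' : Ordinal.{v}) (h : o' < o), ih o' h)

/-- `S` generates a free abelian subgroup of `G` with `S` as a free basis: any two elements of
the generated subgroup commute and no nontrivial product of powers of pairwise distinct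
elements of `S` is the identity. -/
def IsFreeAbelianBasis {G : Type*} [Group G] (S : Set G) : Prop :=
  (∀ x ∈ Subgroup.closure S, ∀ y ∈ Subgroup.closure S, x * y = y * x) ∧
  ∀ n : ℕ, 1 ≤ n → ∀ s : Fin n → G, (∀ i, s i ∈ S) → Function.Injective s →
    ∀ k : Fin n → ℤ, (∀ i, k i ≠ 0) → (List.ofFn fun i => s i ^ k i).prod ≠ 1

/-!
Build a binary Cantor scheme of open cells in `G`. At each level the cells are pairwise
disjoint, and for every rank `γ < κ⁺` a single free basis `K` has points of its `γ`-th
Cantor–Bendixson derivative in every cell. To descend one level, a point of rank `γ + 1` in a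
cell is an accumulation point of points of rank `γ`, so every cell contains as many points of
rank `γ` of one `K` as needed. Nontrivial products of bounded powers of distinct such points stay
`≠ 1` on small neighbourhoods, which can be taken basic, with small diameter and closure inside
the parent cell. There are at most `κ` choices of finitely many basic sets but `κ⁺` ranks, and
`κ⁺` is regular, so one choice serves all ranks.

The branches of the scheme converge to a compact perfect set `P`. Commutation passes to the
limit, and a nontrivial product of powers of distinct points of `P` is a product of points from
distinct cells of a deep enough level, hence `≠ 1`.
-/

open Topology TopologicalSpace Function
open scoped ENNReal

section CantorBendixson

variable {X : Type u} [TopologicalSpace X] (A : Set X)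

theorem cbDeriv_zero : cbDeriv A (0 : Ordinal.{v}) = A :=
  Ordinal.limitRecOn_zero _ _ _

theorem cbDeriv_succ (γ : Ordinal.{v}) :
    cbDeriv A (Order.succ γ) = {x ∈ cbDeriv A γ | AccPt x (𝓟 (cbDeriv A γ))} := by
  rw [Order.succ_eq_add_one]
  exact Ordinal.limitRecOn_add_one _ _ _ _

theorem cbDeriv_limit {γ : Ordinal.{v}} (hγ : Order.IsSuccLimit γ) :
    cbDeriv A γ = ⋂ γ' < γ, cbDeriv A γ' :=
  Ordinal.limitRecOn_limit _ _ _ _ hγ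

theorem cbDeriv_antitone : Antitone (cbDeriv A : Ordinal.{v} → Set X) := by
  intro γ δ hγδ
  induction δ using Ordinal.limitRecOn with
  | zero => rw [nonpos_iff_eq_zero.1 hγδ]
  | add_one δ ih =>
    rcases hγδ.eq_or_lt with rfl | hlt
    · rfl
    · rw [← Order.succ_eq_add_one, cbDeriv_succ]
      exact fun x hx => ih (Order.le_of_lt_succ hlt) hx.1
  | limit δ hδ _ =>
    rcases hγδ.eq_or_lt with rfl | hlt
    · rfl
    · rw [cbDeriv_limit A hδ]
      exact biInter_subset_of_mem hlt

theorem cbDeriv_subset (γ : Ordinal.{v}) : cbDeriv A γ ⊆ A :=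
  (cbDeriv_antitone A (zero_le : 0 ≤ γ)).trans (cbDeriv_zero A).subset

end CantorBendixson

theorem Cardinal.exists_forall_lt_ord_succ {κ : Cardinal.{u}} (hκ : ℵ₀ ≤ κ) {T : Type u}
    (hT : #T ≤ κ) {P : Ordinal.{u} → T → Prop} (hP : ∀ t, Antitone fun γ => P γ t)
    (h : ∀ γ < (Order.succ κ).ord, ∃ t, P γ t) : ∃ t, ∀ γ < (Order.succ κ).ord, P γ t := by
  by_contra! hcon
  choose g hg_lt hg using hcon
  have hsup : ⨆ t, g t < (Order.succ κ).ord := by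
    refine Ordinal.iSup_lt_of_lt_cof ?_ hg_lt
    rw [(isRegular_succ hκ).cof_ord]
    exact hT.trans_lt (Order.lt_succ κ)
  obtain ⟨t, ht⟩ := h _ hsup
  exact hg t (hP t (Ordinal.le_iSup g t) ht)

theorem Cardinal.mk_arrow_le_of_finite {κ : Cardinal.{u}} (hκ : ℵ₀ ≤ κ) (M : Type) [Finite M]
    {T : Type u} (hT : #T ≤ κ) : #(M → T) ≤ κ := by
  have := Fintype.ofFinite M
  rw [mk_arrow, mk_fintype M, lift_natCast, lift_uzero, power_natCast]
  exact (power_le_power_right hT).trans (power_nat_le hκ)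

theorem exists_seq_of_forall_exists_succ {α : ℕ → Type*} (p : ∀ n, α n → Prop)
    (r : ∀ n, α n → α (n + 1) → Prop) {a : α 0} (ha : p 0 a)
    (step : ∀ n a, p n a → ∃ b, p (n + 1) b ∧ r n a b) :
    ∃ f : ∀ n, α n, ∀ n, p n (f n) ∧ r n (f n) (f (n + 1)) := by
  choose g hg using step
  let F : ∀ n, {x : α n // p n x} := fun n =>
    Nat.rec ⟨a, ha⟩ (fun n x => ⟨g n x.1 x.2, (hg n x.1 x.2).1⟩) n
  exact ⟨fun n => (F n).1, fun n => ⟨(F n).2, (hg n (F n).1 (F n).2).2⟩⟩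

theorem Set.Infinite.exists_injective_mem {α N M : Type*} [Finite M] {S : N → Set α}
    (hS : Pairwise (Disjoint on S)) (hinf : ∀ n, (S n).Infinite) (π : M → N) :
    ∃ z : M → α, Injective z ∧ ∀ m, z m ∈ S (π m) := by
  obtain ⟨k, ⟨e⟩⟩ := Finite.exists_equiv_fin M
  have : ∀ n, ∃ g : ℕ → α, Injective g ∧ ∀ j, g j ∈ S n := fun n =>
    let emb := (hinf n).natEmbedding
    ⟨fun j => emb j, Subtype.val_injective.comp emb.injective, fun j => (emb j).2⟩
  choose f hf_inj hf_mem using this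
  refine ⟨fun m => f (π m) (e m), fun m m' (h : f (π m) (e m) = f (π m') (e m')) => ?_,
    fun m => hf_mem _ _⟩
  have hπ : π m = π m' := by
    by_contra hne
    exact (hS hne).ne_of_mem (hf_mem _ _) (hf_mem _ _) h
  rw [hπ] at h
  exact e.injective (Fin.val_injective (hf_inj _ h))

section FreeFamilies

variable {G : Type*} [Group G] {ι : Type*}

theorem Subgroup.closure_mul_comm {S : Set G} (hS : ∀ x ∈ S, ∀ y ∈ S, x * y = y * x) :
    ∀ x ∈ Subgroup.closure S, ∀ y ∈ Subgroup.closure S, x * y = y * x :=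
  have := Subgroup.isMulCommutative_closure hS
  fun _ hx _ hy => setLike_mul_comm hx hy

def IsFreeUpTo (c : ℕ) (V : ι → Set G) : Prop :=
  ∀ m : ℕ, 1 ≤ m → ∀ t : Fin m → ι, Injective t → ∀ k : Fin m → ℤ, (∀ i, k i ≠ 0) →
    (∀ i, (k i).natAbs ≤ c) → ∀ y : Fin m → G, (∀ i, y i ∈ V (t i)) →
      (List.ofFn fun i => y i ^ k i).prod ≠ 1

theorem isFreeUpTo_zero (V : ι → Set G) : IsFreeUpTo 0 V :=
  fun _ hm _ _ _ hk hkc _ _ => absurd (Int.natAbs_eq_zero.1 (Nat.le_zero.1 (hkc ⟨0, hm⟩))) (hk _)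

theorem IsFreeUpTo.mono {c : ℕ} {V W : ι → Set G} (hV : IsFreeUpTo c V) (hWV : ∀ i, W i ⊆ V i) :
    IsFreeUpTo c W :=
  fun m hm t ht k hk hkc y hy => hV m hm t ht k hk hkc y fun i => hWV _ (hy i)

theorem IsFreeAbelianBasis.isFreeUpTo_singleton {K : Set G} (hK : IsFreeAbelianBasis K)
    {z : ι → G} (hz : Injective z) (hzK : ∀ i, z i ∈ K) (c : ℕ) :
    IsFreeUpTo c fun i => {z i} := by
  intro m hm t ht k hk _ y hy
  obtain rfl : y = z ∘ t := funext hy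
  exact hK.2 m hm _ (fun i => hzK _) (hz.comp ht) k hk

theorem IsFreeUpTo.exists_isOpen [TopologicalSpace G] [IsTopologicalGroup G] [T1Space G]
    [Finite ι] {c : ℕ} {z : ι → G} (hz : IsFreeUpTo c fun i => {z i}) :
    ∃ A : ι → Set G, (∀ i, IsOpen (A i)) ∧ (∀ i, z i ∈ A i) ∧ IsFreeUpTo c A := by
  have hword : ∀ {m : ℕ} (t : Fin m → ι) (k : Fin m → ℤ),
      Continuous fun w : ι → G => (List.ofFn fun i => w (t i) ^ k i).prod := fun t k => by
    simp only [List.ofFn_eq_map]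
    exact continuous_list_prod _ fun i _ => (continuous_apply (t i)).zpow (k i)
  -- only finitely many words are involved: at most `Nat.card ι` letters, exponents in `[-c, c]`
  have hev : ∀ᶠ w in 𝓝 z, ∀ m ∈ {m | m ≤ Nat.card ι}, ∀ (t : Fin m → ι)
      (k : Fin m → Set.Icc (-(c : ℤ)) c), 1 ≤ m → Injective t → (∀ i, (k i : ℤ) ≠ 0) →
        (List.ofFn fun i => w (t i) ^ (k i : ℤ)).prod ≠ 1 := by
    refine (eventually_all_finite (finite_le_nat _)).2 fun m _ => eventually_all.2 fun t =>
      eventually_all.2 fun k => ?_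
    by_cases hpat : 1 ≤ m ∧ Injective t ∧ ∀ i, (k i : ℤ) ≠ 0
    · filter_upwards [(hword t _).continuousAt.eventually_ne
        (hz m hpat.1 t hpat.2.1 _ hpat.2.2
          (fun i => by have := (k i).2; simp only [mem_Icc] at this; omega) _ fun i => rfl)]
        with w hw using fun _ _ _ => hw
    · exact Eventually.of_forall fun w h1 h2 h3 => absurd ⟨h1, h2, h3⟩ hpat
  rw [nhds_pi] at hev
  obtain ⟨I, B, hB, hIB⟩ := mem_pi'.1 hev
  refine ⟨fun i => interior (B i), fun i => isOpen_interior,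
    fun i => mem_interior_iff_mem_nhds.2 (hB i), ?_⟩
  intro m hm t ht k hk hkc y hy
  have hw : extend t y z ∈ (I : Set ι).pi B := fun j _ => by
    by_cases hj : ∃ i, t i = j
    · obtain ⟨i, rfl⟩ := hj
      rw [ht.extend_apply]
      exact interior_subset (hy i)
    · rw [extend_apply' _ _ _ (by simpa using hj)]
      exact mem_of_mem_nhds (hB j)
  have := hIB hw m (by simpa using Nat.card_le_card_of_injective t ht) t (fun i => ⟨k i, by
    have := hkc i; simp only [mem_Icc]; omega⟩) hm ht hk
  simpa only [ht.extend_apply] using this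

end FreeFamilies

section Witnesses

variable {G : Type u} [Group G] {ι : Type*}

def IsWitnessedAt [TopologicalSpace G] (γ : Ordinal.{u}) (U : ι → Set G) : Prop :=
  ∃ K : Set G, IsFreeAbelianBasis K ∧ ∀ i, (cbDeriv K γ ∩ U i).Nonempty

theorem isWitnessedAt_antitone [TopologicalSpace G] {U : ι → Set G} :
    Antitone fun γ : Ordinal.{u} => IsWitnessedAt γ U := by
  rintro γ γ' hγ ⟨K, hK, hKU⟩
  exact ⟨K, hK, fun i => (hKU i).mono (inter_subset_inter_left _ (cbDeriv_antitone K hγ))⟩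

structure IsGoodFamily [TopologicalSpace G] (o : Ordinal.{u}) (U : ι → Set G) : Prop where
  isOpen : ∀ i, IsOpen (U i)
  pairwise_disjoint : Pairwise (Disjoint on U)
  witnessed : ∀ γ < o, IsWitnessedAt γ U

end Witnesses

section Refinement

variable {G : Type u} [Group G] [MetricSpace G] [IsTopologicalGroup G] {B : Set (Set G)}
  {N M : Type*} [Finite M]

open Metric in
theorem exists_basic_nhds_isFreeUpTo (hB : IsTopologicalBasis B) {z : M → G} (hz : Injective z)
    {W : M → Set G} (hW : ∀ m, IsOpen (W m)) (hzW : ∀ m, z m ∈ W m) {c : ℕ}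
    (hfree : IsFreeUpTo c fun m => {z m}) {ε : ℝ≥0∞} (hε : 0 < ε) :
    ∃ b : M → B, (∀ m, z m ∈ (b m : Set G)) ∧ Pairwise (Disjoint on fun m => (b m : Set G)) ∧
      (∀ m, closure (b m : Set G) ⊆ W m) ∧ (∀ m, ediam (b m : Set G) ≤ ε) ∧
      IsFreeUpTo c fun m => (b m : Set G) := by
  obtain ⟨A, hA, hzA, hAfree⟩ := hfree.exists_isOpen
  obtain ⟨D, hD, hDdisj⟩ := (finite_range z).t2_separation
  have hbasic : ∀ m, ∃ v ∈ B, z m ∈ v ∧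
      closure v ⊆ A m ∩ D (z m) ∩ W m ∩ eball (z m) (ε / 2) := fun m => by
    have hO : A m ∩ D (z m) ∩ W m ∩ eball (z m) (ε / 2) ∈ 𝓝 (z m) :=
      ((((hA m).inter (hD _).2).inter (hW m)).inter isOpen_eball).mem_nhds
        ⟨⟨⟨hzA m, (hD _).1⟩, hzW m⟩, mem_eball_self (ENNReal.half_pos hε.ne')⟩
    obtain ⟨C, hC, hCc, hCO⟩ := exists_mem_nhds_isClosed_subset hO
    obtain ⟨v, hvB, hzv, hvC⟩ := hB.mem_nhds_iff.1 hC
    exact ⟨v, hvB, hzv, (closure_minimal hvC hCc).trans hCO⟩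
  choose v hvB hzv hv using hbasic
  have hvsub : ∀ m, v m ⊆ A m ∩ D (z m) ∩ W m ∩ eball (z m) (ε / 2) :=
    fun m => subset_closure.trans (hv m)
  refine ⟨fun m => ⟨v m, hvB m⟩, hzv, fun m m' hne => ?_, fun m => (hv m).trans ?_,
    fun m => ?_, hAfree.mono fun m => (hvsub m).trans ?_⟩
  · exact (hDdisj (mem_range_self m) (mem_range_self m') (hz.ne hne)).mono
      ((hvsub m).trans (by intro x hx; exact hx.1.1.2))
      ((hvsub m').trans (by intro x hx; exact hx.1.1.2))
  · exact fun x hx => hx.1.2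
  · calc ediam (v m) ≤ ediam (eball (z m) (ε / 2)) := ediam_mono fun x hx => (hvsub m hx).2
      _ ≤ 2 * (ε / 2) := ediam_eball_le
      _ = ε := ENNReal.mul_div_cancel two_ne_zero ENNReal.ofNat_ne_top
  · exact fun x hx => hx.1.1.1

theorem exists_basic_refinement_witnessedAt (hB : IsTopologicalBasis B) (π : M → N)
    {U : N → Set G} (hU : ∀ n, IsOpen (U n)) (hUdisj : Pairwise (Disjoint on U))
    {γ : Ordinal.{u}} (hγ : IsWitnessedAt (Order.succ γ) U) {ε : ℝ≥0∞} (hε : 0 < ε) (c : ℕ) :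
    ∃ b : M → B, (Pairwise (Disjoint on fun m => (b m : Set G)) ∧
      (∀ m, closure (b m : Set G) ⊆ U (π m)) ∧ (∀ m, Metric.ediam (b m : Set G) ≤ ε) ∧
      IsFreeUpTo c fun m => (b m : Set G)) ∧ IsWitnessedAt γ fun m => (b m : Set G) := by
  obtain ⟨K, hK, hKU⟩ := hγ
  have hinf : ∀ n, (U n ∩ cbDeriv K γ).Infinite := fun n => by
    obtain ⟨x, hxK, hxU⟩ := hKU n
    rw [cbDeriv_succ] at hxK
    exact Set.Infinite.of_accPt (hxK.2.nhds_inter ((hU n).mem_nhds hxU))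
  obtain ⟨z, hz, hzU⟩ := Set.Infinite.exists_injective_mem
    (fun n n' hne => (hUdisj hne).mono inter_subset_left inter_subset_left) hinf π
  obtain ⟨b, hzb, hdisj, hcl, hdiam, hfree⟩ := exists_basic_nhds_isFreeUpTo hB hz
    (fun m => hU (π m)) (fun m => (hzU m).1)
    (hK.isFreeUpTo_singleton hz (fun m => cbDeriv_subset K γ (hzU m).2) c) hε
  exact ⟨b, ⟨hdisj, hcl, hdiam, hfree⟩, K, hK, fun m => ⟨z m, (hzU m).2, hzb m⟩⟩

end Refinement

theorem IsGoodFamily.exists_refinement {G : Type u} [Group G] [MetricSpace G]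
    [IsTopologicalGroup G] {κ : Cardinal.{u}} (hκ : ℵ₀ ≤ κ) {B : Set (Set G)}
    {N M : Type} [Finite M] (hB : IsTopologicalBasis B) (hBκ : #B ≤ κ) (π : M → N) {U : N → Set G}
    (hU : IsGoodFamily (Order.succ κ).ord U) {ε : ℝ≥0∞} (hε : 0 < ε) (c : ℕ) :
    ∃ V : M → Set G, IsGoodFamily (Order.succ κ).ord V ∧ (∀ m, closure (V m) ⊆ U (π m)) ∧
      (∀ m, Metric.ediam (V m) ≤ ε) ∧ IsFreeUpTo c V := by
  have hlim := isSuccLimit_ord (hκ.trans (Order.le_succ κ))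
  -- finitely many basic sets can be chosen in at most `κ` ways, fewer than the `κ⁺` ranks
  obtain ⟨b, hb⟩ := exists_forall_lt_ord_succ hκ (mk_arrow_le_of_finite hκ M hBκ)
    (fun _ _ _ hγ h => ⟨h.1, isWitnessedAt_antitone hγ h.2⟩)
    fun γ hγ => exists_basic_refinement_witnessedAt hB π hU.isOpen hU.pairwise_disjoint
      (hU.witnessed _ (hlim.succ_lt hγ)) hε c
  obtain ⟨hdisj, hcl, hdiam, hfree⟩ := (hb 0 hlim.bot_lt).1
  exact ⟨fun m => b m, ⟨fun m => hB.isOpen (b m).2, hdisj, fun γ hγ => (hb γ hγ).2⟩,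
    hcl, hdiam, hfree⟩

section CantorScheme

open CantorScheme PiNat

instance Pi.perfectSpace_of_infinite {ι β : Type*} [Infinite ι] [TopologicalSpace β]
    [Nontrivial β] : PerfectSpace (ι → β) where
  univ_preperfect x _ := by
    classical
    refine accPt_iff_nhds.2 fun W hW => ?_
    rw [nhds_pi] at hW
    obtain ⟨I, t, ht, hIt⟩ := mem_pi'.1 hW
    obtain ⟨i, hi⟩ := Infinite.exists_notMem_finset I
    obtain ⟨b, hb⟩ := exists_ne (x i)
    refine ⟨update x i b, ⟨hIt fun j hj => ?_, mem_univ _⟩,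
      fun h => hb (by simpa using congrFun h i)⟩
    rw [update_of_ne (by rintro rfl; exact hi hj)]
    exact mem_of_mem_nhds (ht j)

variable {β α : Type*} {A : List β → Set α}

theorem CantorScheme.exists_continuous_injective [TopologicalSpace β] [DiscreteTopology β]
    [MetricSpace α] [CompleteSpace α] (hanti : ClosureAntitone A)
    (hdisj : CantorScheme.Disjoint A) (hdiam : VanishingDiam A) (hne : ∀ l, (A l).Nonempty) :
    ∃ p : (ℕ → β) → α, Continuous p ∧ Injective p ∧ ∀ x n, p x ∈ A (res x n) := by
  have hdom := hanti.map_of_vanishingDiam hdiam hne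
  refine ⟨fun x => (inducedMap A).2 ⟨x, hdom ▸ mem_univ x⟩,
    hdiam.map_continuous.comp (continuous_id.subtype_mk _), fun x y h => ?_,
    fun x n => map_mem _ n⟩
  simpa using hdisj.map_injective h

theorem CantorScheme.vanishingDiam_of_ediam_le [PseudoMetricSpace α]
    (h : ∀ a l, Metric.ediam (A (a :: l)) ≤ 2⁻¹ ^ l.length) : VanishingDiam A := fun x => by
  rw [← tendsto_add_atTop_iff_nat 1]
  refine tendsto_of_tendsto_of_tendsto_of_le_of_le tendsto_const_nhds
    (ENNReal.tendsto_pow_atTop_nhds_zero_iff (r := 2⁻¹).2 (by norm_num))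
    (fun _ => bot_le) fun n => ?_
  simpa [res_succ, res_length] using h (x n) (res x n)

theorem CantorScheme.VanishingDiam.tendsto_of_mem_res [PseudoMetricSpace α]
    (hA : VanishingDiam A) {x : ℕ → β} {a : α} {u : ℕ → α} (ha : ∀ n, a ∈ A (res x n))
    (hu : ∀ n, u n ∈ A (res x n)) : Tendsto u atTop (𝓝 a) :=
  tendsto_iff_edist_tendsto_0.2 <| tendsto_of_tendsto_of_tendsto_of_le_of_le tendsto_const_nhds
    (hA x) (fun _ => bot_le) fun n => Metric.edist_le_ediam_of_mem (hu n) (ha n)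

theorem PiNat.eventually_injective_res {ι : Type*} [Finite ι] {σ : ι → ℕ → β}
    (hσ : Injective σ) : ∀ᶠ n in atTop, Injective fun i => res (σ i) n := by
  have : ∀ i j, ∀ᶠ n in atTop, res (σ i) n = res (σ j) n → i = j := fun i j => by
    by_cases hij : i = j
    · exact Eventually.of_forall fun _ _ => hij
    obtain ⟨d, hd⟩ := ne_iff.1 (hσ.ne hij)
    filter_upwards [eventually_gt_atTop d] with n hn h
    exact absurd (res_eq_res.1 h hn) hd
  filter_upwards [eventually_all.2 fun i => eventually_all.2 (this i)] with n hn i j using hn i j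

variable {G : Type u} [Group G] {A : List β → Set G} {p : (ℕ → β) → G}

theorem CantorScheme.isFreeAbelianBasis_range (hp : ∀ x n, p x ∈ A (res x n))
    (hcomm : ∀ x y, p x * p y = p y * p x)
    (hfree : ∀ n, IsFreeUpTo n fun v : List.Vector β n => A v.1) :
    IsFreeAbelianBasis (range p) := by
  refine ⟨Subgroup.closure_mul_comm (by rintro _ ⟨x, rfl⟩ _ ⟨y, rfl⟩; exact hcomm x y), ?_⟩
  intro m hm s hs hsinj k hk
  choose σ hσ using hs
  have hσinj : Injective σ := fun i j h => hsinj (by rw [← hσ i, ← hσ j, h])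
  obtain ⟨n, hres, hkn⟩ := ((eventually_injective_res hσinj).and
    (eventually_all.2 fun i => eventually_ge_atTop (k i).natAbs)).exists
  refine hfree n m hm (fun i => ⟨res (σ i) n, res_length _ _⟩)
    (fun i j h => hres (congrArg Subtype.val h)) k hk hkn s fun i => ?_
  rw [← hσ i]
  exact hp _ _

variable [MetricSpace G] [IsTopologicalGroup G]

theorem CantorScheme.commute_of_witnessed (hdiam : VanishingDiam A)
    (hp : ∀ x n, p x ∈ A (res x n)) (hwit : ∀ n, IsWitnessedAt 0 fun v : List.Vector β n => A v.1)
    (x y : ℕ → β) : p x * p y = p y * p x := by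
  have : ∀ n, ∃ a ∈ A (res x n), ∃ b ∈ A (res y n), a * b = b * a := fun n => by
    obtain ⟨K, hK, hKA⟩ := hwit n
    simp only [cbDeriv_zero] at hKA
    obtain ⟨a, haK, ha⟩ := hKA ⟨res x n, res_length x n⟩
    obtain ⟨b, hbK, hb⟩ := hKA ⟨res y n, res_length y n⟩
    exact ⟨a, ha, b, hb, hK.1 a (Subgroup.subset_closure haK) b (Subgroup.subset_closure hbK)⟩
  choose a ha b hb hab using this
  have ha' := hdiam.tendsto_of_mem_res (hp x) ha
  have hb' := hdiam.tendsto_of_mem_res (hp y) hb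
  exact tendsto_nhds_unique (ha'.mul hb') ((hb'.mul ha').congr fun n => (hab n).symm)

theorem CantorScheme.exists_perfect_isFreeAbelianBasis [CompleteSpace G] {A : List Bool → Set G}
    (hanti : ClosureAntitone A) (hdisj : CantorScheme.Disjoint A) (hdiam : VanishingDiam A)
    (hwit : ∀ n, IsWitnessedAt 0 fun v : List.Vector Bool n => A v.1)
    (hfree : ∀ n, IsFreeUpTo n fun v : List.Vector Bool n => A v.1) :
    ∃ P : Set G, IsPerfectSet P ∧ IsFreeAbelianBasis P := by
  have hne : ∀ l, (A l).Nonempty := fun l => by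
    obtain ⟨K, -, hK⟩ := hwit l.length
    exact (hK ⟨l, rfl⟩).mono inter_subset_right
  obtain ⟨p, hpc, hpi, hp⟩ := exists_continuous_injective hanti hdisj hdiam hne
  have hP : IsClosed (range p) := (isCompact_range hpc).isClosed
  refine ⟨range p, ⟨range_nonempty p, ⟨inferInstance, rfl, hP.completeSpace_coe⟩, ?_⟩,
    isFreeAbelianBasis_range hp (commute_of_witnessed hdiam hp hwit) hfree⟩
  rintro _ ⟨x, rfl⟩
  simpa using (PerfectSpace.univ_preperfect x (mem_univ x)).map hpc.continuousAt hpi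

end CantorScheme

theorem exists_isTopologicalBasis_mk_eq_topWeight (X : Type u) [TopologicalSpace X] :
    ∃ B : Set (Set X), IsTopologicalBasis B ∧ #B = topWeight X := by
  have : Nonempty {B : Set (Set X) // IsTopologicalBasis B} := ⟨⟨_, isTopologicalBasis_opens⟩⟩
  obtain ⟨⟨B, hB⟩, hBw⟩ := ciInf_mem fun B : {B : Set (Set X) // IsTopologicalBasis B} => #B.1
  exact ⟨B, hB, hBw⟩

theorem exists_perfect_isFreeAbelianBasis_of_isTopologicalBasis {G : Type u} [Group G]
    [MetricSpace G] [CompleteSpace G] [IsTopologicalGroup G] {κ : Cardinal.{u}} (hκ : ℵ₀ ≤ κ)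
    {B : Set (Set G)} (hB : IsTopologicalBasis B) (hBκ : #B ≤ κ)
    (h : ∀ γ < (Order.succ κ).ord, ∃ S : Set G,
      (∀ γ' < γ, (cbDeriv S γ').Nonempty) ∧ IsFreeAbelianBasis S) :
    ∃ P : Set G, IsPerfectSet P ∧ IsFreeAbelianBasis P := by
  have hlim := isSuccLimit_ord (hκ.trans (Order.le_succ κ))
  have hroot : IsGoodFamily (Order.succ κ).ord fun _ : List.Vector Bool 0 => (univ : Set G) :=
    ⟨fun _ => isOpen_univ, Subsingleton.pairwise, fun γ hγ => by
      obtain ⟨S, hS, hSfree⟩ := h _ (hlim.succ_lt hγ)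
      obtain ⟨x, hx⟩ := hS γ (Order.lt_succ γ)
      exact ⟨S, hSfree, fun _ => ⟨x, hx, mem_univ x⟩⟩⟩
  obtain ⟨U, hU⟩ := exists_seq_of_forall_exists_succ (α := fun n => List.Vector Bool n → Set G)
    (fun _ U => IsGoodFamily (Order.succ κ).ord U)
    (fun n U V => (∀ v, closure (V v) ⊆ U v.tail) ∧ (∀ v, Metric.ediam (V v) ≤ 2⁻¹ ^ n) ∧
      IsFreeUpTo (n + 1) V) hroot
    fun n U hU => hU.exists_refinement hκ hB hBκ List.Vector.tail
      (ENNReal.pow_pos (by norm_num) n) (n + 1)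
  -- `PiNat.res` puts the newest letter first, so the parent of a cell `v` is `v.tail`
  let A : List Bool → Set G := fun l => U l.length ⟨l, rfl⟩
  have hA : ∀ n (v : List.Vector Bool n), A v.1 = U n v := by rintro n ⟨l, rfl⟩; rfl
  refine CantorScheme.exists_perfect_isFreeAbelianBasis (A := A)
    (fun l a => (hU l.length).2.1 ⟨a :: l, rfl⟩)
    (fun l a b hab => (hU (l.length + 1)).1.pairwise_disjoint
      fun h => hab (List.cons.inj (congrArg Subtype.val h)).1)
    (CantorScheme.vanishingDiam_of_ediam_le fun a l => (hU l.length).2.2.1 ⟨a :: l, rfl⟩)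
    (fun n => by simpa only [hA] using (hU n).1.witnessed 0 hlim.bot_lt) fun n => ?_
  cases n with
  | zero => exact isFreeUpTo_zero _
  | succ n => simpa only [hA] using (hU n).2.2.2

theorem statement8 (κ : Cardinal.{u}) (hκ : ℵ₀ ≤ κ)
    {G : Type u} [Group G] [TopologicalSpace G] [IsTopologicalGroup G]
    (hG : CompletelyMetrizable G) (hw : topWeight G ≤ κ)
    (h : ∀ γ : Ordinal.{u}, γ < (Order.succ κ).ord → ∃ S : Set G,
      (∀ γ' : Ordinal.{u}, γ' < γ → (cbDeriv S γ').Nonempty) ∧ IsFreeAbelianBasis S) :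
    ∃ P : Set G, IsPerfectSet P ∧ IsFreeAbelianBasis P := by
  obtain ⟨m, rfl, hm⟩ := hG
  let _ : MetricSpace G := m
  have : CompleteSpace G := hm
  obtain ⟨B, hB, hBw⟩ := exists_isTopologicalBasis_mk_eq_topWeight G
  exact exists_perfect_isFreeAbelianBasis_of_isTopologicalBasis hκ hB (hBw.trans_le hw) h
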